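/- arXiv:1010.4849 — 2 statements merged into one kernel-verified Lean document; each statement's English description precedes it below -/
import Mathlib

section
/- Let ρ ∈ (-1, 1) and define ψ(x,y) = |x+y|/(|x|+|y|) for (x,y) ≠ (0,0), ψ(0,0) = 1. Then the integral over θ ∈ [-π, π] of ψ(cos θ, ρ cos θ + sqrt(1-ρ^2) sin θ) · cos θ dθ equals 0. -/
noncomputable def psi (x y : ℝ) : ℝ := if x = 0 ∧ y = 0 then 1 else |x + y| / (|x| + |y|)

lemma psi_neg (x y : ℝ) : psi (-x) (-y) = psi x y := by
  unfold psi
  simp only [neg_eq_zero, abs_neg]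
  rw [show -x + -y = -(x+y) by ring, abs_neg]

theorem stmt6 (ρ : ℝ) (hρ : ρ ∈ Set.Ioo (-1:ℝ) 1) :
    ∫ θ in (-Real.pi)..Real.pi,
      psi (Real.cos θ) (ρ * Real.cos θ + Real.sqrt (1 - ρ^2) * Real.sin θ) * Real.cos θ = 0 := by
  obtain ⟨h1, h2⟩ := hρ
  set s := Real.sqrt (1 - ρ^2) with hs
  have hspos : 0 < s := Real.sqrt_pos.mpr (by nlinarith)
  set f : ℝ → ℝ := fun θ =>
    psi (Real.cos θ) (ρ * Real.cos θ + s * Real.sin θ) * Real.cos θ with hf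
  have hdenom : ∀ θ : ℝ, 0 < |Real.cos θ| + |ρ * Real.cos θ + s * Real.sin θ| := by
    intro θ
    rcases eq_or_ne (Real.cos θ) 0 with hc | hc
    · have hsin : Real.sin θ ≠ 0 := by
        intro h
        have := Real.sin_sq_add_cos_sq θ
        rw [h, hc] at this; norm_num at this
      have : ρ * Real.cos θ + s * Real.sin θ ≠ 0 := by
        rw [hc]; simp
        exact ⟨ne_of_gt hspos, hsin⟩
      positivity
    · positivity
  have hfeq : f = fun θ =>
      |Real.cos θ + (ρ * Real.cos θ + s * Real.sin θ)| /
        (|Real.cos θ| + |ρ * Real.cos θ + s * Real.sin θ|) * Real.cos θ := by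
    funext θ
    have h := hdenom θ
    simp only [hf, psi]
    rw [if_neg]
    rintro ⟨ha, hb⟩
    rw [ha, mul_zero, zero_add] at hb
    have hp := Real.sin_sq_add_cos_sq θ
    rcases mul_eq_zero.mp hb with h' | h'
    · exact ne_of_gt hspos h'
    · rw [ha, h'] at hp; norm_num at hp
  have hcont : Continuous f := by
    rw [hfeq]
    apply Continuous.mul _ Real.continuous_cos
    apply Continuous.div
    · exact (Real.continuous_cos.add (by continuity)).abs
    · exact (Real.continuous_cos.abs.add (by continuity))
    · intro θ; exact ne_of_gt (hdenom θ)
  have hanti : ∀ θ : ℝ, f (θ + Real.pi) = -f θ := by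
    intro θ
    simp only [hf, Real.cos_add_pi, Real.sin_add_pi]
    rw [show ρ * -Real.cos θ + s * -Real.sin θ = -(ρ * Real.cos θ + s * Real.sin θ) by ring,
      psi_neg]
    ring
  have hint : ∀ a b : ℝ, IntervalIntegrable f MeasureTheory.volume a b :=
    fun a b => hcont.intervalIntegrable a b
  have hsplit : ∫ θ in (-Real.pi)..Real.pi, f θ =
      (∫ θ in (-Real.pi)..(0:ℝ), f θ) + ∫ θ in (0:ℝ)..Real.pi, f θ :=
    (intervalIntegral.integral_add_adjacent_intervals (hint _ _) (hint _ _)).symm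
  have hleft : ∫ θ in (-Real.pi)..(0:ℝ), f θ = -∫ θ in (0:ℝ)..Real.pi, f θ := by
    have := intervalIntegral.integral_comp_sub_right f Real.pi (a := 0) (b := Real.pi)
    rw [zero_sub, sub_self] at this
    rw [← this]
    have : ∀ θ : ℝ, f (θ - Real.pi) = -f θ := by
      intro θ
      have := hanti (θ - Real.pi)
      rw [sub_add_cancel] at this
      linarith [this]
    simp_rw [this]
    rw [intervalIntegral.integral_neg]
  show ∫ θ in (-Real.pi)..Real.pi, f θ = 0
  rw [hsplit, hleft]; ring
end

section
/- For the second-difference filter a = (1,-2,1) and H ∈ (0,1), define ρ_a(H) = (2^{2H+2} - 3^{2H} - 7)/(8 - 2^{2H+1}). Then |ρ_a(H)| < 1 for all H ∈ (0,1); equivalently, the Gaussian vector of two successive second-order increments of fBm is nondegenerate. -/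
open Real Set

theorem stmt19 :
    ∀ H ∈ Set.Ioo (0:ℝ) 1,
      |((2:ℝ) ^ (2*H + 2) - (3:ℝ) ^ (2*H) - 7) / (8 - (2:ℝ) ^ (2*H + 1))| < 1 := by
  intro H hH
  obtain ⟨h0, h1⟩ := hH
  set t : ℝ := 2*H with ht
  have ht0 : 0 < t := by positivity
  have ht2 : t < 2 := by simp only [ht]; linarith
  set α : ℝ := Real.logb 2 3 with hαdef
  have h2α : (2:ℝ) ^ α = 3 := Real.rpow_logb (by norm_num) (by norm_num) (by norm_num)
  have hα1 : 1 ≤ α := by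
    rw [hαdef, Real.le_logb_iff_rpow_le (by norm_num) (by norm_num)]
    norm_num
  have hα2 : α ≤ 2 := by
    rw [hαdef, Real.logb_le_iff_le_rpow (by norm_num) (by norm_num)]
    norm_num
  set x : ℝ := (2:ℝ) ^ t with hxdef
  have hx1 : 1 < x := Real.one_lt_rpow (by norm_num) ht0
  have h22 : (2:ℝ) ^ (2:ℝ) = 4 := by
    rw [show (2:ℝ) = ((2:ℕ):ℝ) from by norm_num, Real.rpow_natCast]; norm_num
  have hx4 : x < 4 := by
    have := Real.rpow_lt_rpow_of_exponent_lt (x := 2) (by norm_num) ht2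
    rw [h22] at this
    exact this
  -- key identity: 3^t = x^α
  have hy : (3:ℝ) ^ t = x ^ α := by
    rw [← h2α, hxdef, ← Real.rpow_mul (by norm_num : (0:ℝ) ≤ 2),
      ← Real.rpow_mul (by norm_num : (0:ℝ) ≤ 2), mul_comm]
  have h4α : (4:ℝ) ^ α = 9 := by
    rw [← h22, ← Real.rpow_mul (by norm_num : (0:ℝ) ≤ 2), mul_comm,
      Real.rpow_mul (by norm_num : (0:ℝ) ≤ 2), h2α]
    norm_num[show (2:ℝ) = ((2:ℕ):ℝ) from by norm_num, Real.rpow_natCast]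
  -- Bernoulli lower bound: x^α ≥ 9 + (9α/4)(x-4)
  have hlow : 9 + 9*α/4 * (x - 4) ≤ x ^ α := by
    have hber := one_add_mul_self_le_rpow_one_add (s := x/4 - 1) (by linarith) hα1
    have heq : (1 + (x/4 - 1)) ^ α = x ^ α / 9 := by
      rw [show 1 + (x/4 - 1) = x/4 by ring, Real.div_rpow (by linarith) (by norm_num), h4α]
    rw [heq] at hber
    have h9 : (0:ℝ) < 9 := by norm_num
    nlinarith [hber]
  -- chord upper bound: x^α ≤ (8x - 5)/3
  have hhigh : x ^ α ≤ (8*x - 5)/3 := by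
    have hcx := (convexOn_rpow hα1).2 (Set.mem_Ici.2 (by norm_num : (0:ℝ) ≤ 1))
      (Set.mem_Ici.2 (by norm_num : (0:ℝ) ≤ 4))
      (by linarith : (0:ℝ) ≤ (4-x)/3) (by linarith : (0:ℝ) ≤ (x-1)/3)
      (by ring : (4-x)/3 + (x-1)/3 = 1)
    simp only [smul_eq_mul] at hcx
    rw [show (4-x)/3 * 1 + (x-1)/3 * 4 = x by ring, Real.one_rpow, h4α] at hcx
    linarith
  -- rewrite the goal in terms of x and y = 3^t
  have hpow1 : (2:ℝ) ^ (t + 1) = 2 * x := by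
    rw [Real.rpow_add (by norm_num) t 1, Real.rpow_one, hxdef]; ring
  have hpow2 : (2:ℝ) ^ (t + 2) = 4 * x := by
    rw [Real.rpow_add (by norm_num) t 2, h22, hxdef]; ring
  have hgoal : |(4*x - x^α - 7) / (8 - 2*x)| < 1 := by
    rw [abs_div, div_lt_one (by rw [abs_of_pos (by linarith)]; linarith),
      abs_of_pos (by linarith : (0:ℝ) < 8 - 2*x), abs_lt]
    constructor
    · -- -(8-2x) < 4x - x^α - 7  ⟺  x^α < 2x + 1; from chord: x^α ≤ (8x-5)/3 < 2x+1
      nlinarith [hhigh]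
    · -- 4x - x^α - 7 < 8 - 2x  ⟺  6x - x^α < 15; from Bernoulli and α ≤ 2
      nlinarith [hlow, hα2]
  calc |((2:ℝ) ^ (2*H + 2) - (3:ℝ) ^ (2*H) - 7) / (8 - (2:ℝ) ^ (2*H + 1))|
      = |(4*x - x^α - 7) / (8 - 2*x)| := by
        rw [show 2*H + 2 = t + 2 from by rw [ht], show 2*H + 1 = t + 1 from by rw [ht],
          show (3:ℝ) ^ (2*H) = x ^ α from by rw [← hy, ht], hpow1, hpow2]
    _ < 1 := hgoal
end
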